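/- Let R be a nonzero ring and let 'C_R^{le} be the set of all left regular elements c of R such that Rc is an essential left ideal of R. Suppose that 'C_R^{le} meets every essential left ideal of R (i.e. for every essential left ideal L of R, 'C_R^{le} ∩ L ≠ ∅). Then 'C_R^{le} is a left denominator set of R. -/

import Mathlib

/-!
Right multiplication by `r` is an `R`-linear map `R → R`, and preimages of essential
submodules under linear maps are essential. Pulling back `Rs` along `a ↦ a * r` therefore gives
an essential left ideal, which by hypothesis contains some `s' ∈ 'C_R^{le}`; this is the left Ore
condition `s' * r ∈ Rs`. For closure under products, `R(st)` is the image of the essential `Rs`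
under the injective map `a ↦ a * t`, whose range `Rt` is essential. Elements of `'C_R^{le}` are
left regular, so `r * s = 0` already forces `r = 0`.
-/

/-- The set `'C_R^{le}` of left regular elements `c` of `R` such that the left ideal
`Rc = span R {c}` is an essential left ideal of `R`. -/
def leftRegEss (R : Type*) [Ring R] : Set R :=
  {c : R | (∀ r : R, r * c = 0 → r = 0) ∧
    ∀ J : Submodule R R, J ≠ ⊥ → Submodule.span R {c} ⊓ J ≠ ⊥}

namespace Submodule

variable {R M N : Type*} [Ring R] [AddCommGroup M] [Module R M] [AddCommGroup N] [Module R N]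

def IsEssential (L : Submodule R M) : Prop :=
  ∀ J : Submodule R M, J ≠ ⊥ → L ⊓ J ≠ ⊥

theorem isEssential_top : (⊤ : Submodule R M).IsEssential := by
  intro J hJ
  rwa [top_inf_eq]

theorem IsEssential.comap {L : Submodule R N} (hL : L.IsEssential) (f : M →ₗ[R] N) :
    (L.comap f).IsEssential := by
  intro J hJ
  by_cases hker : J ≤ LinearMap.ker f
  · rwa [inf_eq_right.mpr (hker.trans (LinearMap.ker_le_comap f))]
  · intro h
    apply hL _ (LinearMap.le_ker_iff_map.not.mp hker)
    rw [inf_comm, map_inf_eq_map_inf_comap, inf_comm, h, map_bot]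

theorem IsEssential.map_of_injective {L : Submodule R M} (hL : L.IsEssential) {f : M →ₗ[R] N}
    (hf : Function.Injective f) (hrange : (LinearMap.range f).IsEssential) :
    (L.map f).IsEssential := by
  intro J hJ h
  have hcomap : J.comap f ≠ ⊥ := by
    intro hJ'
    apply hrange J hJ
    rw [← map_comap_eq, hJ', map_bot]
  apply hL _ hcomap
  apply map_injective_of_injective hf
  rw [map_bot, ← map_inf_eq_map_inf_comap, h]

end Submodule

section LeftRegEss

variable {R : Type*} [Ring R]

theorem mem_leftRegEss_iff {c : R} :
    c ∈ leftRegEss R ↔ c ∈ nonZeroDivisorsRight R ∧ (Submodule.span R {c}).IsEssential :=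
  Iff.rfl

variable (R) in
theorem one_mem_leftRegEss : (1 : R) ∈ leftRegEss R := by
  refine mem_leftRegEss_iff.mpr ⟨one_mem _, ?_⟩
  rw [← Ideal.span, Ideal.span_singleton_one]
  exact Submodule.isEssential_top

variable (R) in
theorem zero_notMem_leftRegEss [Nontrivial R] : (0 : R) ∉ leftRegEss R :=
  fun h => one_ne_zero (h.1 1 (mul_zero 1))

theorem span_singleton_mul_eq_map (s t : R) :
    Submodule.span R {s * t} = (Submodule.span R {s}).map (LinearMap.toSpanSingleton R R t) := by
  rw [Submodule.map_span, Set.image_singleton, LinearMap.toSpanSingleton_apply, smul_eq_mul]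

theorem mul_mem_leftRegEss {s t : R} (hs : s ∈ leftRegEss R) (ht : t ∈ leftRegEss R) :
    s * t ∈ leftRegEss R := by
  rw [mem_leftRegEss_iff] at hs ht ⊢
  refine ⟨mul_mem hs.1 ht.1, ?_⟩
  have hinj : Function.Injective (LinearMap.toSpanSingleton R R t) := by
    rw [← LinearMap.ker_eq_bot, LinearMap.ker_eq_bot']
    exact ht.1
  rw [span_singleton_mul_eq_map]
  refine hs.2.map_of_injective hinj ?_
  rw [LinearMap.range_toSpanSingleton]
  exact ht.2

theorem exists_mul_eq_mul_of_mem_leftRegEss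
    (hmeet : ∀ L : Submodule R R, L.IsEssential → ∃ s ∈ leftRegEss R, s ∈ L)
    (r : R) {s : R} (hs : s ∈ leftRegEss R) :
    ∃ s' ∈ leftRegEss R, ∃ r' : R, s' * r = r' * s := by
  obtain ⟨s', hs', hs'r⟩ :=
    hmeet _ ((mem_leftRegEss_iff.mp hs).2.comap (LinearMap.toSpanSingleton R R r))
  rw [Submodule.mem_comap, LinearMap.toSpanSingleton_apply, smul_eq_mul] at hs'r
  obtain ⟨r', hr'⟩ := Ideal.mem_span_singleton'.mp hs'r
  exact ⟨s', hs', r', hr'.symm⟩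

end LeftRegEss

/-- For a nonzero ring `R`, if `'C_R^{le}` meets every essential left
ideal of `R`, then `'C_R^{le}` is a left denominator set of `R`: it is a multiplicative
set, it satisfies the left Ore condition, and whenever `r * s = 0` with `s ∈ 'C_R^{le}`
there is `t ∈ 'C_R^{le}` with `t * r = 0`. -/
theorem stmt5 {R : Type*} [Ring R] [Nontrivial R]
    (hmeet : ∀ L : Submodule R R, (∀ J : Submodule R R, J ≠ ⊥ → L ⊓ J ≠ ⊥) →
      ∃ s ∈ leftRegEss R, s ∈ L) :
    (1 : R) ∈ leftRegEss R ∧ (0 : R) ∉ leftRegEss R ∧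
    (∀ s ∈ leftRegEss R, ∀ t ∈ leftRegEss R, s * t ∈ leftRegEss R) ∧
    (∀ r : R, ∀ s ∈ leftRegEss R, ∃ s' ∈ leftRegEss R, ∃ r' : R, s' * r = r' * s) ∧
    (∀ r : R, ∀ s ∈ leftRegEss R, r * s = 0 → ∃ t ∈ leftRegEss R, t * r = 0) :=
  ⟨one_mem_leftRegEss R, zero_notMem_leftRegEss R,
    fun _ hs _ ht => mul_mem_leftRegEss hs ht,
    fun r _ hs => exists_mul_eq_mul_of_mem_leftRegEss hmeet r hs,
    fun r _ hs hrs => ⟨1, one_mem_leftRegEss R, by rw [one_mul]; exact hs.1 r hrs⟩⟩
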